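/- Let λ be an n-core and w the minimal-length coset representative with λ = w∅, and for each positive root α let k_{w,α} = ⌊⟨w^{-1}(ρ/n), α⟩⌋ be the Shi coordinate of the alcove w^{-1}A_0. Then Σ_{i=1}^{n−1} k_{w, α_{i,n−1}} = λ_1. -/

import Mathlib

/-!
Position `q * n + i - c` of the abacus is level `q` of runner `i`, and runner `i` carries the
beads of the levels below `a i`. Counting the beads at positions `≥ q₀ * n - c` runner by
runner and directly (for `q₀` so small that all lower positions are beads) gives `c = -ℓ`,
since `∑ aᵢ = 0`. The largest bead `λ₁ + ℓ - 1` is the top bead of the runner `m` maximising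
`(aᵢ, i)` lexicographically, which is `u (n - 1)` by the minimality of `u`; hence
`λ₁ = (a m - 1) n + m + 1`. On the other hand the Shi coordinate for `α_{i,n-1}` is
`a m - a (u i)`, lowered by one when `u i > m`, and summing over `i ≠ n - 1` gives the same
value.
-/

open Finset

namespace Shi

/-- Number of boxes in column `j` (0-indexed) of the partition `lam` with `ℓ` positive parts:
the conjugate partition. -/
def conjP (lam : ℕ → ℕ) (ℓ j : ℕ) : ℕ := ((Finset.range ℓ).filter (fun i => j < lam i)).card

/-- Hook length of the (0-indexed) box `(i, j)` of the partition `lam` having `ℓ` positive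
parts. -/
def hookP (lam : ℕ → ℕ) (ℓ i j : ℕ) : ℤ :=
  (lam i : ℤ) - j + conjP lam ℓ j - i - 1

/-- `lam : ℕ → ℕ` (0-indexed, weakly decreasing, exactly `ℓ` positive parts) is an `n`-core:
no hook length is divisible by `n`. -/
def IsCore (n : ℕ) (lam : ℕ → ℕ) (ℓ : ℕ) : Prop :=
  Antitone lam ∧ (∀ i, 0 < lam i ↔ i < ℓ) ∧
    ∀ i j, i < ℓ → j < lam i → ¬ ((n : ℤ) ∣ hookP lam ℓ i j)

/-- The `k`-th β-number (first column hook length) of `lam`, 0-indexed. -/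
def betaP (lam : ℕ → ℕ) (ℓ k : ℕ) : ℤ := (lam k : ℤ) + ℓ - k - 1

/-- `x` is a bead of the original abacus of `lam`: a negative integer or a β-number. -/
def IsBead (lam : ℕ → ℕ) (ℓ : ℕ) (x : ℤ) : Prop := x < 0 ∨ ∃ k < ℓ, betaP lam ℓ k = x

/-- The vector `ρ = ((n-1)/2, (n-1)/2 - 1, …, (1-n)/2)`, half the sum of positive roots. -/
noncomputable def rhoV (n : ℕ) : Fin n → ℝ := fun i => ((n : ℝ) - 1) / 2 - ((i : ℕ) : ℝ)

/-- `w⁻¹(v)` for the affine transformation `w = t_a ∘ u` (translation by `a` after the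
permutation `u`), i.e. `w⁻¹(v) = u⁻¹ · (v - a)`. -/
noncomputable def winv (n : ℕ) (u : Equiv.Perm (Fin n)) (a : Fin n → ℤ) (v : Fin n → ℝ) : Fin n → ℝ :=
  fun i => v (u i) - (a (u i) : ℝ)

/-- `u` is the minimal length permutation sorting `-a` into antidominant position, i.e.
`a ∘ u` is weakly increasing and ties are broken stably; this is the finite part of the
minimal length coset representative `w = t_a u`. -/
def SortsMin {n : ℕ} (u : Equiv.Perm (Fin n)) (a : Fin n → ℤ) : Prop :=
  ∀ i j : Fin n, i < j → a (u i) < a (u j) ∨ (a (u i) = a (u j) ∧ u i < u j)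

/-- `a` is the vector of level numbers of the balanced abacus of `lam`: for some shift `c`
of the original abacus, the beads on runner `i` occupy exactly the levels `< a i`, and the
balance number is `0`. -/
def BalancedLevels (n : ℕ) (lam : ℕ → ℕ) (ℓ : ℕ) (a : Fin n → ℤ) : Prop :=
  (∑ i, a i) = 0 ∧ ∃ c : ℤ, ∀ i : Fin n, ∀ q : ℤ,
    IsBead lam ℓ (q * n + ((i : ℕ) : ℤ) - c) ↔ q < a i


section Abacus

variable {lam : ℕ → ℕ} {ℓ : ℕ}

lemma betaP_strictAnti (hlam : Antitone lam) : StrictAnti (betaP lam ℓ) := by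
  intro k k' h
  have := hlam h.le
  simp only [betaP]
  omega

lemma betaP_nonneg {k : ℕ} (hk : k < ℓ) : 0 ≤ betaP lam ℓ k := by
  simp only [betaP]
  omega

lemma isGreatest_isBead (hlam : Antitone lam) (hpos : ∀ i, 0 < lam i ↔ i < ℓ) :
    IsGreatest {x | IsBead lam ℓ x} ((lam 0 : ℤ) + ℓ - 1) := by
  refine ⟨?_, ?_⟩
  · rcases Nat.eq_zero_or_pos ℓ with rfl | hℓ
    · have := hpos 0
      left
      omega
    · exact Or.inr ⟨0, hℓ, by simp [betaP]⟩
  · rintro x (hx | ⟨k, -, rfl⟩)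
    · omega
    · have := hlam (Nat.zero_le k)
      simp only [betaP]
      omega

noncomputable def beadsFrom (lam : ℕ → ℕ) (ℓ : ℕ) (A : ℤ) : Finset ℤ :=
  Ico A 0 ∪ (range ℓ).image (betaP lam ℓ)

lemma mem_beadsFrom {A : ℤ} (hA : A ≤ 0) {x : ℤ} :
    x ∈ beadsFrom lam ℓ A ↔ A ≤ x ∧ IsBead lam ℓ x := by
  simp only [beadsFrom, IsBead, mem_union, mem_Ico, mem_image, mem_range]
  constructor
  · rintro (hx | ⟨k, hk, rfl⟩)
    · exact ⟨hx.1, Or.inl hx.2⟩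
    · exact ⟨hA.trans (betaP_nonneg hk), Or.inr ⟨k, hk, rfl⟩⟩
  · rintro ⟨hAx, hx | hx⟩
    · exact Or.inl ⟨hAx, hx⟩
    · exact Or.inr hx

lemma card_beadsFrom (hlam : Antitone lam) {A : ℤ} (hA : A ≤ 0) :
    ((beadsFrom lam ℓ A).card : ℤ) = -A + ℓ := by
  have hdisj : Disjoint (Ico A 0) ((range ℓ).image (betaP lam ℓ)) := by
    simp only [disjoint_left, mem_Ico, mem_image, mem_range, not_exists, not_and]
    rintro x ⟨-, hx⟩ k hk rfl
    exact (betaP_nonneg hk).not_gt hx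
  rw [beadsFrom, card_union_of_disjoint hdisj, Int.card_Ico,
    card_image_of_injective _ (betaP_strictAnti hlam).injective, card_range]
  omega

end Abacus

lemma exists_eq_mul_add_sub {n : ℕ} [NeZero n] (x c : ℤ) :
    ∃ (q : ℤ) (i : Fin n), x = q * n + i - c := by
  refine ⟨(Int.divModEquiv n (x + c)).1, (Int.divModEquiv n (x + c)).2, ?_⟩
  have := (Int.divModEquiv n).symm_apply_apply (x + c)
  rw [Int.divModEquiv_symm_apply] at this
  omega

section Runners

variable {n : ℕ} [NeZero n] {P : ℤ → Prop} {c : ℤ} {a : Fin n → ℤ}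

lemma card_eq_sum_levels (hP : ∀ (i : Fin n) (q : ℤ), P (q * n + i - c) ↔ q < a i)
    {q₀ : ℤ} (hq₀ : ∀ i, q₀ ≤ a i) {S : Finset ℤ}
    (hS : ∀ x, x ∈ S ↔ q₀ * n - c ≤ x ∧ P x) :
    (S.card : ℤ) = ∑ i, (a i - q₀) := by
  let e : (Σ _ : Fin n, ℤ) ≃ ℤ :=
    (Equiv.sigmaEquivProd _ _).trans ((Equiv.prodComm _ _).trans
      ((Int.divModEquiv n).symm.trans (Equiv.subRight c)))
  have hcard := card_equiv e (s := univ.sigma fun i => Ico q₀ (a i)) (t := S) ?_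
  · rw [← hcard, card_sigma]
    push_cast
    exact sum_congr rfl fun i _ => by rw [Int.card_Ico, Int.toNat_of_nonneg (by linarith [hq₀ i])]
  rintro ⟨i, q⟩
  simp only [e, mem_sigma, mem_univ, mem_Ico, true_and, hS, Equiv.trans_apply,
    Equiv.sigmaEquivProd_apply, Equiv.prodComm_apply, Prod.swap_prod_mk,
    Int.divModEquiv_symm_apply, Equiv.subRight_apply, hP]
  have hi := i.isLt
  constructor
  · rintro ⟨h1, h2⟩
    exact ⟨by nlinarith, h2⟩
  · rintro ⟨h1, h2⟩
    refine ⟨?_, h2⟩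
    by_contra! h
    nlinarith

lemma eq_of_isGreatest_of_levels {M : ℤ} (hM : IsGreatest {x | P x} M)
    (hP : ∀ (i : Fin n) (q : ℤ), P (q * n + i - c) ↔ q < a i) {m : Fin n}
    (hm : ∀ i, a i * n + i ≤ a m * n + m) :
    M = (a m - 1) * n + m - c := by
  refine le_antisymm ?_ (hM.2 ((hP m _).mpr (by omega)))
  obtain ⟨q, i, rfl⟩ := exists_eq_mul_add_sub (n := n) M c
  have hq : q + 1 ≤ a i := (hP i q).mp hM.1
  have := hm i
  have := i.isLt
  nlinarith

end Runners

lemma shift_eq_neg_length {lam : ℕ → ℕ} {ℓ n : ℕ} [NeZero n] (hlam : Antitone lam)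
    {a : Fin n → ℤ} (hsum : ∑ i, a i = 0) {c : ℤ}
    (hbead : ∀ (i : Fin n) (q : ℤ), IsBead lam ℓ (q * n + i - c) ↔ q < a i) : c = -ℓ := by
  have hn : (1 : ℤ) ≤ n := by exact_mod_cast Nat.one_le_iff_ne_zero.mpr (NeZero.ne n)
  set q₀ := -|c| - 1
  have hA : q₀ * n - c ≤ 0 := by nlinarith [le_abs_self c, neg_abs_le c]
  have hq₀ : ∀ i, q₀ ≤ a i := fun i =>
    ((hbead i q₀).mp (Or.inl (by nlinarith [i.isLt, le_abs_self c, neg_abs_le c]))).le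
  have hcount := card_eq_sum_levels hbead hq₀ fun x => mem_beadsFrom hA
  rw [card_beadsFrom hlam hA, sum_sub_distrib, hsum, sum_const, card_univ, Fintype.card_fin,
    nsmul_eq_mul] at hcount
  linarith

lemma SortsMin.le_apply_last {k : ℕ} {u : Equiv.Perm (Fin (k + 1))} {a : Fin (k + 1) → ℤ}
    (hu : SortsMin u a) (s : Fin (k + 1)) :
    a s * (k + 1 : ℕ) + s ≤ a (u (Fin.last k)) * (k + 1 : ℕ) + u (Fin.last k) := by
  obtain ⟨j, rfl⟩ := u.surjective s
  rcases (Fin.le_last j).lt_or_eq with hj | rfl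
  · have hs : ((u j : ℕ) : ℤ) < (k + 1 : ℕ) := by exact_mod_cast (u j).isLt
    rcases hu j _ hj with h | ⟨h, h'⟩
    · nlinarith
    · have : ((u j : ℕ) : ℤ) < (u (Fin.last k) : ℕ) := by exact_mod_cast h'
      rw [h]
      linarith
  · exact le_rfl

lemma floor_sub_div_of_ne {n : ℕ} {s m : Fin n} (h : s ≠ m) :
    ⌊((m : ℝ) - s) / n⌋ = if s < m then 0 else -1 := by
  have hn : (0 : ℝ) < n := by exact_mod_cast s.pos
  have hs : (s : ℝ) < n := by exact_mod_cast s.isLt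
  have hm : (m : ℝ) < n := by exact_mod_cast m.isLt
  rw [Int.floor_eq_iff, le_div_iff₀ hn, div_lt_iff₀ hn]
  split_ifs with hlt
  · have : (s : ℝ) < m := by exact_mod_cast hlt
    push_cast
    constructor <;> linarith
  · have : (m : ℝ) < s := by exact_mod_cast lt_of_le_of_ne (not_lt.mp hlt) h.symm
    push_cast
    constructor <;> linarith

lemma winv_rho_div_sub {n : ℕ} (u : Equiv.Perm (Fin n)) (a : Fin n → ℤ) (j j' : Fin n) :
    winv n u a (fun t => rhoV n t / n) j - winv n u a (fun t => rhoV n t / n) j' =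
      (((u j' : ℕ) : ℝ) - (u j : ℕ)) / n + ((a (u j') - a (u j) : ℤ) : ℝ) := by
  simp only [winv, rhoV]
  push_cast
  ring

lemma floor_winv_rho_div_sub {n : ℕ} (u : Equiv.Perm (Fin n)) (a : Fin n → ℤ) {j j' : Fin n}
    (h : j ≠ j') :
    ⌊winv n u a (fun t => rhoV n t / n) j - winv n u a (fun t => rhoV n t / n) j'⌋ =
      a (u j') - a (u j) + if u j < u j' then 0 else -1 := by
  rw [winv_rho_div_sub, Int.floor_add_intCast, floor_sub_div_of_ne (u.injective.ne h), add_comm]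

lemma sum_ite_lt_zero_neg_one {n : ℕ} (m : Fin n) :
    ∑ s : Fin n, (if s < m then (0 : ℤ) else -1) = -(n - m) := by
  have hIci : univ.filter (fun s => ¬ s < m) = Ici m := by ext; simp
  rw [sum_ite, hIci, sum_const_zero, sum_const, Fin.card_Ici, zero_add, nsmul_eq_mul,
    Nat.cast_sub m.isLt.le]
  ring

/-- the sum of the Shi coordinates `k_{w,α_{i,n-1}}` of the alcove
`w⁻¹A_0` over `1 ≤ i ≤ n-1` equals `λ_1`. -/
theorem col_coord_sum (n : ℕ) (hn : 2 ≤ n) (lam : ℕ → ℕ) (ℓ : ℕ)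
    (hcore : IsCore n lam ℓ) (a : Fin n → ℤ) (hbal : BalancedLevels n lam ℓ a)
    (u : Equiv.Perm (Fin n)) (hu : SortsMin u a) :
    (∑ i : Fin (n - 1),
      ⌊winv n u a (fun t => rhoV n t / n) (Fin.castLE (by omega) i) -
        winv n u a (fun t => rhoV n t / n) ⟨n - 1, by omega⟩⌋) = (lam 0 : ℤ) := by
  obtain ⟨hlam, hpos, -⟩ := hcore
  obtain ⟨hsum, c, hbead⟩ := hbal
  obtain ⟨k, rfl⟩ : ∃ k, n = k + 1 := ⟨n - 1, by omega⟩
  set m := u (Fin.last k)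
  have hc : c = -ℓ := shift_eq_neg_length hlam hsum hbead
  have htop := eq_of_isGreatest_of_levels (isGreatest_isBead hlam hpos) hbead hu.le_apply_last
  change ∑ i : Fin k, ⌊winv _ u a _ i.castSucc - winv _ u a _ (Fin.last k)⌋ = _
  rw [sum_congr rfl fun i _ => floor_winv_rho_div_sub u a (Fin.castSucc_lt_last i).ne]
  have hsplit := Fin.sum_univ_castSucc fun s => a m - a (u s) + if u s < m then 0 else -1
  rw [Equiv.sum_comp u fun s => a m - a s + if s < m then 0 else -1, sum_add_distrib,
    sum_sub_distrib, hsum, sum_ite_lt_zero_neg_one, sum_const, card_univ, Fintype.card_fin,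
    nsmul_eq_mul] at hsplit
  simp only [m, lt_irrefl, if_false] at hsplit
  push_cast at htop hsplit
  linarith

end Shi
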